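/- For the system matrix A and each t with 2 ≤ t ≤ m, the t-th row sum of B = Aᵀ satisfies B_{tt} + ∑_{k≠t} B_{tk} = −q^{m-(t-1)}; in particular each such row sum is strictly negative when q > 0. -/

import Mathlib

/-! Away from the first row, row `t` of `Aᵀ` is row `t` of `Π` restricted to the columns
`0, …, m - 1`, minus the unit vector `e_t`. The matrix `Π = P·R` is stochastic, every row of `P`
and of `R` being a binomial expansion of `1 = (p + (1 - p)) ^ n`, and the one omitted column is
`Π(t, m) = q ^ (m - t)`. Hence the row sum is `(1 - q ^ (m - t)) - 1`. -/

open Finset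

/-- Treatment probability matrix entry `P(i,j)`. -/
noncomputable def Ptreat (m : ℕ) (q : ℝ) (i j : ℕ) : ℝ :=
  if i ≤ j then ((m - i).choose (j - i) : ℝ) * q ^ (j - i) * (1 - q) ^ (m - j) else 0

/-- Repair probability matrix entry `R(i,j)`. -/
noncomputable def Rrep (m : ℕ) (r : ℝ) (i j : ℕ) : ℝ :=
  if i = m then (if j = m then 1 else 0)
  else if j ≤ i then (i.choose j : ℝ) * r ^ (i - j) * (1 - r) ^ j else 0

/-- One-day transition matrix `Π = P·R`. -/
noncomputable def Pimat (m : ℕ) (q r : ℝ) (i j : ℕ) : ℝ :=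
  ∑ k ∈ Finset.range (m + 1), Ptreat m q i k * Rrep m r k j

/-- The `m × m` system matrix `A(q,r)` (0-based indices `i = t-1`). -/
noncomputable def Amat (m : ℕ) (q r μ : ℝ) : Matrix (Fin m) (Fin m) ℝ :=
  fun t k =>
    if t = k then
      (if (t : ℕ) = 0 then Pimat m q r 0 0 + μ * (1 - q) ^ m - 1
       else Pimat m q r t t - 1)
    else Pimat m q r k t

lemma Ptreat_row_sum (m : ℕ) (q : ℝ) {i : ℕ} (hi : i ≤ m) :
    ∑ j ∈ range (m + 1), Ptreat m q i j = 1 := by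
  have below_i : ∑ j ∈ Ico 0 i, Ptreat m q i j = 0 :=
    sum_eq_zero fun j hj => if_neg (by simp at hj; omega)
  have shifted : ∀ s ∈ range (m - i + 1),
      Ptreat m q i (i + s) = q ^ s * (1 - q) ^ (m - i - s) * ((m - i).choose s : ℝ) := by
    intro s hs
    simp only [mem_range] at hs
    rw [Ptreat, if_pos (by omega), Nat.add_sub_cancel_left, Nat.sub_add_eq]
    ring
  rw [range_eq_Ico, ← sum_Ico_consecutive _ (Nat.zero_le i) (by omega : i ≤ m + 1), below_i,
    zero_add, sum_Ico_eq_sum_range, (by omega : m + 1 - i = m - i + 1), sum_congr rfl shifted,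
    ← add_pow, add_sub_cancel, one_pow]

lemma Rrep_row_sum (m : ℕ) (r : ℝ) {k : ℕ} (hk : k ≤ m) :
    ∑ j ∈ range (m + 1), Rrep m r k j = 1 := by
  rcases hk.eq_or_lt with rfl | hk
  · simp [Rrep]
  · have vanishing : ∀ j ∈ range (m + 1), j ∉ range (k + 1) → Rrep m r k j = 0 :=
      fun j _ hj => by rw [Rrep, if_neg hk.ne, if_neg (by simpa using hj)]
    have binomial : ((1 - r) + r) ^ k = 1 := by rw [sub_add_cancel, one_pow]
    rw [← sum_subset (range_subset_range.2 (by omega)) vanishing, ← binomial, add_pow]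
    refine sum_congr rfl fun j hj => ?_
    rw [Rrep, if_neg hk.ne, if_pos (Nat.lt_succ_iff.1 (mem_range.1 hj))]
    ring

lemma Pimat_row_sum (m : ℕ) (q r : ℝ) {i : ℕ} (hi : i ≤ m) :
    ∑ j ∈ range (m + 1), Pimat m q r i j = 1 := by
  simp_rw [Pimat]
  rw [sum_comm]
  calc ∑ k ∈ range (m + 1), ∑ j ∈ range (m + 1), Ptreat m q i k * Rrep m r k j
      = ∑ k ∈ range (m + 1), Ptreat m q i k := sum_congr rfl fun k hk => by
        rw [← mul_sum, Rrep_row_sum m r (Nat.lt_succ_iff.1 (mem_range.1 hk)), mul_one]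
    _ = 1 := Ptreat_row_sum m q hi

-- State `m` is absorbing for repair, so only treatment straight to `m` contributes.
lemma Pimat_last (m : ℕ) (q r : ℝ) {i : ℕ} (hi : i ≤ m) :
    Pimat m q r i m = q ^ (m - i) := by
  have only_m : ∀ k ∈ range (m + 1), k ≠ m → Ptreat m q i k * Rrep m r k m = 0 :=
    fun k hk hkm => by
      rw [Rrep, if_neg hkm, if_neg (by simp at hk; omega), mul_zero]
  rw [Pimat, sum_eq_single_of_mem m (self_mem_range_succ m) only_m, Rrep, if_pos rfl,
    if_pos rfl, mul_one, Ptreat, if_pos hi, Nat.sub_self, Nat.choose_self]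
  simp

lemma Amat_transpose_apply_of_ne_zero (m : ℕ) (q r μ : ℝ) {t : Fin m} (ht : (t : ℕ) ≠ 0)
    (k : Fin m) :
    (Amat m q r μ).transpose t k = Pimat m q r t k - (1 : Matrix (Fin m) (Fin m) ℝ) t k := by
  rcases eq_or_ne k t with rfl | hkt
  · simp [Amat, ht]
  · simp [Amat, hkt, Matrix.one_apply_ne' hkt]

lemma sum_Amat_transpose_row_of_ne_zero (m : ℕ) (q r μ : ℝ) {t : Fin m}
    (ht : (t : ℕ) ≠ 0) :
    ∑ k : Fin m, (Amat m q r μ).transpose t k = -q ^ (m - (t : ℕ)) := by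
  have row_sum := Pimat_row_sum m q r t.isLt.le
  rw [sum_range_succ, Pimat_last m q r t.isLt.le] at row_sum
  simp_rw [Amat_transpose_apply_of_ne_zero m q r μ ht, sum_sub_distrib,
    Fin.sum_univ_eq_sum_range (fun k => Pimat m q r t k), Matrix.one_apply, sum_ite_eq,
    if_pos (mem_univ t)]
  linarith

theorem later_row_sums_transpose_general (m : ℕ) (q r μ : ℝ)
    (hq0 : 0 < q) :
    ∀ t : Fin m, 1 ≤ (t : ℕ) →
      (∑ k : Fin m, (Amat m q r μ).transpose t k = -q ^ (m - (t : ℕ))) ∧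
      (∑ k : Fin m, (Amat m q r μ).transpose t k < 0) := by
  intro t ht
  have row_sum := sum_Amat_transpose_row_of_ne_zero m q r μ (t := t) (by omega)
  exact ⟨row_sum, row_sum ▸ neg_neg_of_pos (pow_pos hq0 _)⟩

/-- for `2 ≤ t ≤ m` (0-based `1 ≤ t`), the `t`-th row sum of `B = Aᵀ`
equals `-q^(m-(t-1))` and is strictly negative. -/
theorem later_row_sums_transpose (m : ℕ) (hm : 2 ≤ m) (q r μ : ℝ)
    (hq0 : 0 < q) (hq1 : q < 1) (hr0 : 0 < r) (hr1 : r < 1)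
    (hμ0 : 0 < μ) (hμ1 : μ ≤ 1) :
    ∀ t : Fin m, 1 ≤ (t : ℕ) →
      (∑ k : Fin m, (Amat m q r μ).transpose t k = -q ^ (m - (t : ℕ))) ∧
      (∑ k : Fin m, (Amat m q r μ).transpose t k < 0) :=
  later_row_sums_transpose_general m q r μ hq0
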